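/- arXiv:2010.02143 — 3 statements merged into one kernel-verified Lean document; each statement's English description precedes it below -/
import Mathlib

section
/- For all nonnegative integers m and n, the q-series identity 1/((q)_m (q)_n) = \sum_{n_2=0}^{\min(m,n)} q^{(m-n_2)(n-n_2)} / ((q)_{m-n_2} (q)_{n-n_2} (q)_{n_2}) holds as an identity of formal power series in q. -/
/-!
Clearing denominators, the identity says `∑ⱼ q^{(m-j)(n-j)} [m choose j]_q (q^{n-j+1};q)_j = 1`,
a form of the q-Chu–Vandermonde identity that holds for any element `q` of any commutative ring.
It follows by induction on `m` from the q-Pascal rule `[m+1, j+1] = [m, j+1] + q^{m-j} [m, j]`,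
which telescopes the sum for `m + 1` onto the sum for `m`.
-/

open PowerSeries

/-- The q-Pochhammer symbol `(q;q)_k = ∏_{i=1}^k (1 - q^i)` as a formal power series in `q`. -/
noncomputable def qPoch (k : ℕ) : PowerSeries ℚ :=
  ∏ i ∈ Finset.range k, (1 - (X : PowerSeries ℚ) ^ (i + 1))

open Finset

section CommRing

variable {R : Type*} [CommRing R] (q : R)

def qPochhammer (k : ℕ) : R :=
  ∏ i ∈ range k, (1 - q ^ (i + 1))

/-- `∏_{i<j} (1 - q^{n-i})`, which is `(q;q)_n / (q;q)_{n-j}` for `j ≤ n` and `0` for `j > n`. -/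
def qDescPochhammer (n j : ℕ) : R :=
  ∏ i ∈ range j, (1 - q ^ (n - i))

def qBinomial : ℕ → ℕ → R
  | _, 0 => 1
  | 0, _ + 1 => 0
  | m + 1, j + 1 => qBinomial m (j + 1) + q ^ (m - j) * qBinomial m j

theorem qPochhammer_succ (k : ℕ) : qPochhammer q (k + 1) = qPochhammer q k * (1 - q ^ (k + 1)) :=
  prod_range_succ _ k

theorem qDescPochhammer_succ (n j : ℕ) :
    qDescPochhammer q n (j + 1) = qDescPochhammer q n j * (1 - q ^ (n - j)) :=
  prod_range_succ _ j

theorem qDescPochhammer_eq_zero_of_lt {n j : ℕ} (h : n < j) : qDescPochhammer q n j = 0 :=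
  prod_eq_zero (mem_range.mpr h) (by simp)

theorem qPochhammer_sub_mul_qDescPochhammer {n j : ℕ} (h : j ≤ n) :
    qPochhammer q (n - j) * qDescPochhammer q n j = qPochhammer q n := by
  induction j with
  | zero => simp [qDescPochhammer]
  | succ j ih =>
    have hsucc := qPochhammer_succ q (n - (j + 1))
    rw [show n - (j + 1) + 1 = n - j by omega] at hsucc
    rw [qDescPochhammer_succ, ← ih (by omega), hsucc]
    ring

@[simp]
theorem qBinomial_zero_right (m : ℕ) : qBinomial q m 0 = 1 := by
  cases m <;> rfl

theorem qBinomial_succ_succ (m j : ℕ) :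
    qBinomial q (m + 1) (j + 1) = qBinomial q m (j + 1) + q ^ (m - j) * qBinomial q m j :=
  rfl

theorem qBinomial_eq_zero_of_lt {m j : ℕ} (h : m < j) : qBinomial q m j = 0 := by
  induction m generalizing j with
  | zero => obtain ⟨j, rfl⟩ := Nat.exists_eq_add_of_lt h; rfl
  | succ m ih =>
    obtain ⟨j, rfl⟩ := Nat.exists_eq_succ_of_ne_zero (by omega : j ≠ 0)
    rw [qBinomial_succ_succ, ih (by omega), ih (by omega), mul_zero, add_zero]

@[simp]
theorem qBinomial_self (m : ℕ) : qBinomial q m m = 1 := by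
  induction m with
  | zero => rfl
  | succ m ih => simp [qBinomial_succ_succ, qBinomial_eq_zero_of_lt q (Nat.lt_succ_self m), ih]

theorem qBinomial_mul_qPochhammer {m j : ℕ} (h : j ≤ m) :
    qBinomial q m j * (qPochhammer q (m - j) * qPochhammer q j) = qPochhammer q m := by
  induction m generalizing j with
  | zero =>
    obtain rfl : j = 0 := by omega
    simp [qPochhammer]
  | succ m ih =>
    rcases j with _ | j
    · simp [qPochhammer]
    obtain rfl | hlt : j = m ∨ j < m := by omega
    · simp [qPochhammer]
    have hm : qPochhammer q (m - j) = qPochhammer q (m - (j + 1)) * (1 - q ^ (m - j)) := by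
      have := qPochhammer_succ q (m - (j + 1))
      rwa [show m - (j + 1) + 1 = m - j by omega] at this
    have hpow : q ^ (m - j) * q ^ (j + 1) = q ^ (m + 1) := by
      rw [← pow_add, show m - j + (j + 1) = m + 1 by omega]
    have ih₁ := ih (j := j + 1) (by omega)
    have ih₂ := ih (j := j) (by omega)
    rw [Nat.add_sub_add_right, qBinomial_succ_succ, qPochhammer_succ q m, ← hpow]
    rw [hm] at ih₂ ⊢
    rw [qPochhammer_succ q j] at ih₁ ⊢
    linear_combination (1 - q ^ (m - j)) * ih₁ + q ^ (m - j) * (1 - q ^ (j + 1)) * ih₂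

theorem qPochhammer_mul_qPochhammer_eq {m n j : ℕ} (hm : j ≤ m) (hn : j ≤ n) :
    qPochhammer q m * qPochhammer q n = qBinomial q m j * qDescPochhammer q n j *
      (qPochhammer q (m - j) * qPochhammer q (n - j) * qPochhammer q j) := by
  rw [← qBinomial_mul_qPochhammer q hm, ← qPochhammer_sub_mul_qDescPochhammer q hn]
  ring

-- At `b = 0` the truncated `b - 1` is harmless, as `1 - q ^ 0 = 0`.
theorem pow_mul_eq_pow_succ_mul_add (a b : ℕ) :
    q ^ (a * b) = q ^ ((a + 1) * b) + q ^ (a * (b - 1) + a) * (1 - q ^ b) := by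
  rcases b with _ | b
  · simp
  · rw [Nat.add_sub_cancel]
    ring

theorem sum_pow_mul_qBinomial_mul_qDescPochhammer (m n : ℕ) :
    ∑ j ∈ range (m + 1), q ^ ((m - j) * (n - j)) * (qBinomial q m j * qDescPochhammer q n j) =
      1 := by
  induction m with
  | zero => simp [qDescPochhammer]
  | succ m ih =>
    -- The `j`-th term for `m` is `g j + h j`; by q-Pascal the `(j+1)`-st term for `m+1` is
    -- `g (j + 1) + h j`, and `g 0` is the `0`-th term for `m + 1` while `g (m + 1) = 0`.
    set g : ℕ → R := fun j =>
      q ^ ((m + 1 - j) * (n - j)) * (qBinomial q m j * qDescPochhammer q n j)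
    set h : ℕ → R := fun j =>
      q ^ ((m - j) * (n - (j + 1)) + (m - j)) * (qBinomial q m j * qDescPochhammer q n (j + 1))
    have hsplit : ∀ j ∈ range (m + 1),
        q ^ ((m - j) * (n - j)) * (qBinomial q m j * qDescPochhammer q n j) = g j + h j := by
      intro j hj
      have hsucc : m + 1 - j = m - j + 1 := Nat.sub_add_comm (Nat.lt_succ_iff.mp (mem_range.mp hj))
      simp only [g, h, hsucc, qDescPochhammer_succ, ← Nat.sub_sub]
      rw [pow_mul_eq_pow_succ_mul_add q (m - j) (n - j)]
      ring
    have hpascal : ∀ j ∈ range (m + 1),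
        q ^ ((m + 1 - (j + 1)) * (n - (j + 1))) *
          (qBinomial q (m + 1) (j + 1) * qDescPochhammer q n (j + 1)) = g (j + 1) + h j := by
      intro j _
      simp only [g, h, Nat.add_sub_add_right, qBinomial_succ_succ, pow_add]
      ring
    have hg_last : g (m + 1) = 0 := by
      simp [g, qBinomial_eq_zero_of_lt q (Nat.lt_succ_self m)]
    rw [sum_range_succ', sum_congr rfl hpascal, sum_add_distrib, ← ih, sum_congr rfl hsplit,
      sum_add_distrib, add_right_comm]
    congr 1
    rw [sum_range_succ, hg_last, add_zero, sum_range_succ' g]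
    simp [g]

theorem constantCoeff_qPochhammer_X (k : ℕ) :
    constantCoeff (qPochhammer (X : PowerSeries R) k) = 1 := by
  simp [qPochhammer, map_prod]

end CommRing

theorem qPoch_eq_qPochhammer (k : ℕ) : qPoch k = qPochhammer (X : PowerSeries ℚ) k :=
  rfl

/-- For all nonnegative integers `m` and `n`,
`1/((q)_m (q)_n) = ∑_{n₂=0}^{min(m,n)} q^{(m-n₂)(n-n₂)} / ((q)_{m-n₂} (q)_{n-n₂} (q)_{n₂})`
as formal power series in `q`. -/
theorem durfee_rectangle_identity (m n : ℕ) :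
    (qPoch m * qPoch n)⁻¹ =
      ∑ j ∈ Finset.range (min m n + 1),
        (X : PowerSeries ℚ) ^ ((m - j) * (n - j)) *
          (qPoch (m - j) * qPoch (n - j) * qPoch j)⁻¹ := by
  simp only [qPoch_eq_qPochhammer]
  rw [inv_eq_iff_mul_eq_one (by simp [constantCoeff_qPochhammer_X]), sum_mul,
    ← sum_pow_mul_qBinomial_mul_qDescPochhammer X m n]
  have hvanish : ∀ j ∈ range (m + 1), j ∉ range (min m n + 1) →
      (X : PowerSeries ℚ) ^ ((m - j) * (n - j)) *
        (qBinomial X m j * qDescPochhammer X n j) = 0 := by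
    intro j hjm hj
    simp only [mem_range, not_lt] at hjm hj
    rw [qDescPochhammer_eq_zero_of_lt X (by omega), mul_zero, mul_zero]
  rw [← sum_subset (by simp) hvanish]
  refine sum_congr rfl fun j hj => ?_
  have hjmn := mem_range.mp hj
  set D := qPochhammer (X : PowerSeries ℚ) (m - j) * qPochhammer X (n - j) * qPochhammer X j
  have hD : D⁻¹ * D = 1 := PowerSeries.inv_mul_cancel D (by simp [D, constantCoeff_qPochhammer_X])
  rw [qPochhammer_mul_qPochhammer_eq X (by omega : j ≤ m) (by omega : j ≤ n)]
  linear_combination X ^ ((m - j) * (n - j)) * (qBinomial X m j * qDescPochhammer X n j) * hD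
end

section
/- Let V be a vertex algebra with Li filtration F_0(V) \supset F_1(V) \supset ..., where F_n(V) is spanned by u^{(1)}_{(-1-k_1)} ... u^{(r)}_{(-1-k_r)} 1 with k_1 + ... + k_r \geq n. Then for u in F_r(V), v in F_s(V) and n \geq 0, u_{(n)} v lies in F_{r+s-n}(V), and for arbitrary integer n, u_{(n)} v lies in F_{r+s-n-1}(V). -/
/-- A vertex algebra over `ℚ`: a vector space `V` with a vacuum vector, modes
`op u n v = u₍ₙ₎ v`, bilinear in `u` and `v`, satisfying truncation, the vacuum and creation
properties, and the Borcherds identity (the sums in the Borcherds identity are finitely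
supported by truncation, and are expressed with `finsum`). -/
structure VertexAlg (V : Type*) [AddCommGroup V] [Module ℚ V] where
  vac : V
  op : V → ℤ → V → V
  add_left : ∀ u v : V, ∀ n : ℤ, ∀ w : V, op (u + v) n w = op u n w + op v n w
  smul_left : ∀ (c : ℚ) (u : V) (n : ℤ) (w : V), op (c • u) n w = c • op u n w
  add_right : ∀ (u : V) (n : ℤ) (v w : V), op u n (v + w) = op u n v + op u n w
  smul_right : ∀ (u : V) (n : ℤ) (c : ℚ) (w : V), op u n (c • w) = c • op u n w
  trunc : ∀ u v : V, ∃ N : ℤ, ∀ n ≥ N, op u n v = 0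
  vac_op : ∀ v : V, op vac (-1) v = v
  vac_op' : ∀ (v : V) (n : ℤ), n ≠ -1 → op vac n v = 0
  create : ∀ u : V, op u (-1) vac = u
  create' : ∀ (u : V) (n : ℤ), 0 ≤ n → op u n vac = 0
  borcherds : ∀ (u v w : V) (p q r : ℤ),
    (∑ᶠ i : ℕ, ((Ring.choose p i : ℤ) : ℚ) • op (op u (r + i) v) (p + q - i) w) =
      ∑ᶠ i : ℕ, ((-1 : ℚ) ^ i * ((Ring.choose r i : ℤ) : ℚ)) •
        (op u (p + r - i) (op v (q + i) w) -
          ((-1 : ℚ) ^ r) • op v (q + r - i) (op u (p + i) w))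

/-- The Li filtration: `F_n(V)` is spanned by the vectors
`u⁽¹⁾₍₋₁₋ₖ₁₎ ⋯ u⁽ʳ⁾₍₋₁₋ₖᵣ₎ 𝟙` with `r ≥ 1`, `kᵢ ≥ 0` and `k₁ + ⋯ + kᵣ ≥ n`. -/
noncomputable def liFil {V : Type*} [AddCommGroup V] [Module ℚ V] (A : VertexAlg V) (n : ℕ) :
    Submodule ℚ V :=
  Submodule.span ℚ
    {v : V | ∃ (r : ℕ) (_ : 1 ≤ r) (u : Fin r → V) (k : Fin r → ℕ),
      n ≤ ∑ i, k i ∧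
      v = (List.ofFn fun i => (u i, k i)).foldr
            (fun p acc => A.op p.1 (-1 - (p.2 : ℤ)) acc) A.vac}

/-!
Both statements say that `u₍ₙ₎` lowers the Li filtration by at most `modeDrop n`, and by linearity
it suffices to check this on monomials. For `a₍ₘ₎` acting on a monomial `b₍₋₁₋ₖ₎ y`, with `a`
arbitrary, induct on the length of the monomial using the commutator formula
`a₍ₘ₎ b₍₋₁₋ₖ₎ y = b₍₋₁₋ₖ₎ a₍ₘ₎ y + ∑ᵢ (m choose i) (a₍ᵢ₎ b)₍ₘ₋₁₋ₖ₋ᵢ₎ y`.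
For a monomial `(a₍₋₁₋ₖ₎ y)₍ₙ₎` acting on `v ∈ F_s`, induct on the length of `a₍₋₁₋ₖ₎ y` using
the iterate formula, whose terms are `a₍₋₁₋ₖ₋ᵢ₎ y₍ₙ₊ᵢ₎ v` and `y₍ₙ₋₁₋ₖ₋ᵢ₎ a₍ᵢ₎ v`, where
`a₍ᵢ₎ v ∈ F_{s-i}` by the first step.
-/

namespace VertexAlg

variable {V : Type*} [AddCommGroup V] [Module ℚ V] (A : VertexAlg V)

theorem commutator_formula (u v w : V) (p q : ℤ) :
    A.op u p (A.op v q w) = A.op v q (A.op u p w) +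
      ∑ᶠ i : ℕ, ((Ring.choose p i : ℤ) : ℚ) • A.op (A.op u i v) (p + q - i) w := by
  have h := A.borcherds u v w p q 0
  conv_rhs at h => rw [finsum_eq_single _ 0 fun i hi => by
    obtain ⟨j, rfl⟩ := Nat.exists_eq_succ_of_ne_zero hi
    simp [Ring.choose_zero_succ]]
  simp only [Ring.choose_zero_right, Int.cast_one, mul_one, pow_zero, one_smul, zpow_zero,
    Nat.cast_zero, add_zero, sub_zero, zero_add] at h
  rw [h]
  abel

theorem iterate_formula (u v w : V) (q r : ℤ) :
    A.op (A.op u r v) q w = ∑ᶠ i : ℕ, ((-1 : ℚ) ^ i * ((Ring.choose r i : ℤ) : ℚ)) •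
      (A.op u (r - i) (A.op v (q + i) w) - ((-1 : ℚ) ^ r) • A.op v (q + r - i) (A.op u i w)) := by
  have h := A.borcherds u v w 0 q r
  conv_lhs at h => rw [finsum_eq_single _ 0 fun i hi => by
    obtain ⟨j, rfl⟩ := Nat.exists_eq_succ_of_ne_zero hi
    simp [Ring.choose_zero_succ]]
  simpa only [Ring.choose_zero_right, Int.cast_one, one_smul, Nat.cast_zero, add_zero,
    sub_zero, zero_add] using h

def opLeft (n : ℤ) (w : V) : V →ₗ[ℚ] V where
  toFun u := A.op u n w
  map_add' u v := A.add_left u v n w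
  map_smul' c u := A.smul_left c u n w

def opRight (u : V) (n : ℤ) : V →ₗ[ℚ] V where
  toFun := A.op u n
  map_add' := A.add_right u n
  map_smul' := A.smul_right u n

/-- `monomial [(u₁, k₁), …, (uᵣ, kᵣ)] = u₁₍₋₁₋ₖ₁₎ ⋯ uᵣ₍₋₁₋ₖᵣ₎ 𝟙`, of Li degree `k₁ + ⋯ + kᵣ`. -/
def monomial (L : List (V × ℕ)) : V :=
  L.foldr (fun p x => A.op p.1 (-1 - (p.2 : ℤ)) x) A.vac

theorem monomial_nil : A.monomial [] = A.vac := rfl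

theorem monomial_cons (u : V) (k : ℕ) (L : List (V × ℕ)) :
    A.monomial ((u, k) :: L) = A.op u (-1 - k) (A.monomial L) := rfl

theorem monomial_singleton_zero (u : V) : A.monomial [(u, 0)] = u := by
  simpa [monomial] using A.create u

theorem monomial_cons_mem_liFil (p : V × ℕ) (L : List (V × ℕ)) {n : ℕ}
    (h : n ≤ ((p :: L).map Prod.snd).sum) : A.monomial (p :: L) ∈ liFil A n :=
  Submodule.subset_span
    ⟨(p :: L).length, by simp, fun i => (p :: L)[i].1, fun i => (p :: L)[i].2,
      h.trans_eq (Fin.sum_univ_fun_getElem _ _).symm, by simp [monomial]⟩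

theorem monomial_mem_liFil {L : List (V × ℕ)} {n : ℕ} (h : n ≤ (L.map Prod.snd).sum) :
    A.monomial L ∈ liFil A n := by
  cases L with
  | nil =>
    rw [monomial_nil, ← A.monomial_singleton_zero A.vac]
    exact A.monomial_cons_mem_liFil _ _ (by simpa using h)
  | cons p L => exact A.monomial_cons_mem_liFil p L h

theorem liFil_le_of_monomial_mem {n : ℕ} {M : Submodule ℚ V}
    (h : ∀ L : List (V × ℕ), n ≤ (L.map Prod.snd).sum → A.monomial L ∈ M) : liFil A n ≤ M :=
  Submodule.span_le.2 <| by
    rintro _ ⟨r, -, u, k, hk, rfl⟩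
    exact h _ (by simpa [List.map_ofFn, Function.comp_def, List.sum_ofFn] using hk)

theorem liFil_antitone : Antitone (liFil A) :=
  fun _ _ hmn => A.liFil_le_of_monomial_mem fun _ hL => A.monomial_mem_liFil (hmn.trans hL)

theorem op_neg_mem_liFil (b : V) (k : ℕ) {n : ℤ} {x : V} (hx : x ∈ liFil A n.toNat) :
    A.op b (-1 - k) x ∈ liFil A (n + k).toNat := by
  have hle : liFil A n.toNat ≤ (liFil A (n.toNat + k)).comap (A.opRight b (-1 - k)) :=
    A.liFil_le_of_monomial_mem fun L hL =>
      A.monomial_mem_liFil (L := (b, k) :: L) (by simp only [List.map_cons, List.sum_cons]; omega)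
  exact A.liFil_antitone (by omega) (hle hx)

/-- How far the mode `u₍ₙ₎` lowers the Li filtration: by `n` if `n ≥ 0`, while
`u₍₋₁₋ₖ₎` raises it by `k`. -/
def modeDrop (n : ℤ) : ℤ := if n < 0 then n + 1 else n

theorem modeDrop_of_neg {n : ℤ} (hn : n < 0) : modeDrop n = n + 1 := if_pos hn

theorem modeDrop_of_nonneg {n : ℤ} (hn : 0 ≤ n) : modeDrop n = n := if_neg (not_lt.2 hn)

theorem le_modeDrop (n : ℤ) : n ≤ modeDrop n := by
  unfold modeDrop; split_ifs <;> omega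

theorem modeDrop_le_add_one (n : ℤ) : modeDrop n ≤ n + 1 := by
  unfold modeDrop; split_ifs <;> omega

theorem modeDrop_add_le (n : ℤ) {i : ℤ} (hi : 0 ≤ i) : modeDrop (n + i) ≤ modeDrop n + i := by
  unfold modeDrop; split_ifs <;> omega

theorem op_monomial_mem_liFil (L : List (V × ℕ)) (a : V) (m : ℤ) :
    A.op a m (A.monomial L) ∈ liFil A ((L.map Prod.snd).sum - modeDrop m).toNat := by
  induction L generalizing a m with
  | nil =>
    rcases lt_or_ge m 0 with hm | hm
    · obtain ⟨k, rfl⟩ : ∃ k : ℕ, m = -1 - k := ⟨(-1 - m).toNat, by omega⟩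
      exact A.monomial_mem_liFil (L := [(a, k)]) (by simp [modeDrop_of_neg hm])
    · rw [monomial_nil, A.create' a m hm]
      exact zero_mem _
  | cons p L ih =>
    obtain ⟨b, k⟩ := p
    have := le_modeDrop m
    rw [monomial_cons, commutator_formula]
    refine add_mem ?_ (finsum_induction _ (zero_mem _) (fun _ _ => add_mem)
      fun i => Submodule.smul_mem _ _ ?_)
    · exact A.liFil_antitone (by simp only [List.map_cons, List.sum_cons]; omega)
        (A.op_neg_mem_liFil b k (ih a m))
    · rcases lt_or_ge (m + (-1 - k) - i) 0 with hj | hj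
      · obtain ⟨j, hj'⟩ : ∃ j : ℕ, m + (-1 - k) - i = -1 - j := ⟨(k + i - m).toNat, by omega⟩
        rw [hj', ← monomial_cons]
        exact A.monomial_mem_liFil (by simp only [List.map_cons, List.sum_cons]; omega)
      · have := modeDrop_of_nonneg hj
        exact A.liFil_antitone (by simp only [List.map_cons, List.sum_cons]; omega) (ih _ _)

theorem op_mem_liFil_right (a : V) (m : ℤ) {s : ℕ} {x : V} (hx : x ∈ liFil A s) :
    A.op a m x ∈ liFil A (s - modeDrop m).toNat := by
  have hle : liFil A s ≤ (liFil A (s - modeDrop m).toNat).comap (A.opRight a m) :=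
    A.liFil_le_of_monomial_mem fun L hL =>
      A.liFil_antitone (by omega) (A.op_monomial_mem_liFil L a m)
  exact hle hx

theorem monomial_op_mem_liFil (L : List (V × ℕ)) {s : ℕ} {v : V} (hv : v ∈ liFil A s) (n : ℤ) :
    A.op (A.monomial L) n v ∈ liFil A ((L.map Prod.snd).sum + s - modeDrop n).toNat := by
  induction L generalizing s v n with
  | nil =>
    rcases eq_or_ne n (-1) with rfl | hn
    · rw [monomial_nil, A.vac_op]
      simpa [modeDrop_of_neg] using hv
    · rw [monomial_nil, A.vac_op' v n hn]
      exact zero_mem _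
  | cons p L ih =>
    obtain ⟨a, k⟩ := p
    rw [monomial_cons, iterate_formula]
    refine finsum_induction _ (zero_mem _) (fun _ _ => add_mem)
      fun i => Submodule.smul_mem _ _ (sub_mem ?_ (Submodule.smul_mem _ _ ?_))
    · have := modeDrop_add_le n (Int.natCast_nonneg i)
      rw [show -1 - (k : ℤ) - i = -1 - (k + i : ℕ) by push_cast; ring]
      exact A.liFil_antitone (by simp only [List.map_cons, List.sum_cons]; omega)
        (A.op_neg_mem_liFil a (k + i) (ih hv (n + i)))
    · have := modeDrop_le_add_one (n + (-1 - k) - i)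
      have := le_modeDrop n
      have := modeDrop_of_nonneg (Int.natCast_nonneg i)
      exact A.liFil_antitone (by simp only [List.map_cons, List.sum_cons]; omega)
        (ih (A.op_mem_liFil_right a i hv) (n + (-1 - k) - i))

theorem op_mem_liFil {r s : ℕ} {u v : V} (hu : u ∈ liFil A r) (hv : v ∈ liFil A s) (n : ℤ) :
    A.op u n v ∈ liFil A (r + s - modeDrop n).toNat := by
  have hle : liFil A r ≤ (liFil A (r + s - modeDrop n).toNat).comap (A.opLeft n v) :=
    A.liFil_le_of_monomial_mem fun L hL =>
      A.liFil_antitone (by omega) (A.monomial_op_mem_liFil L hv n)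
  exact hle hu

end VertexAlg

/-- For `u ∈ F_r(V)` and `v ∈ F_s(V)`: if `n ≥ 0` then `u₍ₙ₎v ∈ F_{r+s-n}(V)`, and for an
arbitrary integer `n`, `u₍ₙ₎v ∈ F_{r+s-n-1}(V)` (indices truncated at `0`). -/
theorem li_filtration_modes (V : Type*) [AddCommGroup V] [Module ℚ V] (A : VertexAlg V)
    (r s : ℕ) (u v : V) (hu : u ∈ liFil A r) (hv : v ∈ liFil A s) :
    (∀ n : ℕ, A.op u n v ∈ liFil A (r + s - n)) ∧
    (∀ n : ℤ, A.op u n v ∈ liFil A ((r + s - n - 1 : ℤ).toNat)) := by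
  refine ⟨fun n => ?_, fun n => ?_⟩
  · have h := A.op_mem_liFil hu hv n
    rwa [VertexAlg.modeDrop_of_nonneg n.cast_nonneg,
      show (r + s - n : ℤ).toNat = r + s - n by omega] at h
  · have := VertexAlg.modeDrop_le_add_one n
    exact A.liFil_antitone (by omega) (A.op_mem_liFil hu hv n)
end

section
/- For the quadratic forms B and B' of type A_{n-1} (Theorem 1.1 of the paper) and the Cartan matrix A of type A_{n-1}: for every k in N^{n-1} and every nonnegative integer solution m of the linear system \lambda_i(m) = k_i (where \lambda_i = \sum_{1 \leq s \leq i < \ell \leq n} m_{s,\ell}), the differences B(m) - (1/2) k^T A k and B'(m) - (1/2) k^T A k are nonnegative integers. -/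
/-- Index set for the positive roots of `A_{n-1}`: pairs `(i,j)` with `1 ≤ i < j ≤ n`,
encoded as pairs `(a,b)` of elements of `Fin n` with `a < b` (so `i = a+1`, `j = b+1`). -/
abbrev PairIdx (n : ℕ) := {p : Fin n × Fin n // p.1 < p.2}

/-- The quadratic form `B'(m)` of Theorem 1.1(b): `∑ m_{i₁,j₁} m_{i₂,j₂}` over pairs with
`i₁ ≤ i₂`, `j₁ ≤ j₂`, `j₁ > i₂`. -/
def Bform' (n : ℕ) (m : PairIdx n → ℕ) : ℕ :=
  ∑ p₁ : PairIdx n, ∑ p₂ : PairIdx n,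
    if p₁.1.1 ≤ p₂.1.1 ∧ p₁.1.2 ≤ p₂.1.2 ∧ (p₂.1.1 : ℕ) < (p₁.1.2 : ℕ) then
      m p₁ * m p₂ else 0

/-- The quadratic form `B(m)` of Theorem 1.1(a), given by four sums:
(1) `i₁ < i₂`, `j₁ < j₂`, `j₁ > i₂ + 1`; (2) `i₁ = i₂`, `j₁ ≤ j₂`;
(3) `j₁ = j₂`, `i₁ < i₂`; (4) `m_{i,i+1} m_{j,j'}` with `j < i < i+1 < j'`. -/
def Bform (n : ℕ) (m : PairIdx n → ℕ) : ℕ :=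
  (∑ p₁ : PairIdx n, ∑ p₂ : PairIdx n,
    if p₁.1.1 < p₂.1.1 ∧ p₁.1.2 < p₂.1.2 ∧ (p₂.1.1 : ℕ) + 1 < (p₁.1.2 : ℕ) then
      m p₁ * m p₂ else 0) +
  (∑ p₁ : PairIdx n, ∑ p₂ : PairIdx n,
    if p₁.1.1 = p₂.1.1 ∧ p₁.1.2 ≤ p₂.1.2 then m p₁ * m p₂ else 0) +
  (∑ p₁ : PairIdx n, ∑ p₂ : PairIdx n,
    if p₁.1.2 = p₂.1.2 ∧ p₁.1.1 < p₂.1.1 then m p₁ * m p₂ else 0) +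
  (∑ p₁ : PairIdx n, ∑ p₂ : PairIdx n,
    if (p₁.1.2 : ℕ) = (p₁.1.1 : ℕ) + 1 ∧ p₂.1.1 < p₁.1.1 ∧ p₁.1.2 < p₂.1.2 then
      m p₁ * m p₂ else 0)

/-- `λᵢ = ∑_{1 ≤ s ≤ i < ℓ ≤ n} m_{s,ℓ}`  (here `i` ranges over `1, ..., n-1`). -/
def lam (n : ℕ) (m : PairIdx n → ℕ) (i : ℕ) : ℕ :=
  ∑ p : PairIdx n, if (p.1.1 : ℕ) + 1 ≤ i ∧ i ≤ (p.1.2 : ℕ) then m p else 0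

/-- `½ kᵀAk = ∑ᵢ kᵢ² - ∑ᵢ kᵢ k_{i+1}` for the Cartan matrix `A` of type `A_{n-1}`. -/
def halfCartanForm (n : ℕ) (k : ℕ → ℕ) : ℤ :=
  (∑ i ∈ Finset.Icc 1 (n - 1), (k i : ℤ) ^ 2) -
    ∑ i ∈ Finset.Icc 1 (n - 2), (k i : ℤ) * (k (i + 1) : ℤ)

/-!
Substituting `kᵢ = λᵢ(m)` turns `½ kᵀAk` into a quadratic form `mᵀCm` in `m`, where `C p q`
counts the `i` with `m_p` in `λᵢ` and `m_q` in `λᵢ`, minus those with `m_q` in `λᵢ₊₁`. Its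
symmetrisation `C p q + C q p` is the inner product `(ε_a - ε_b, ε_c - ε_d)` of the roots
`p = (a, b)`, `q = (c, d)`, hence at most the number of endpoints `p` and `q` share. The
symmetrised coefficients of `B'`, and already those of the second and third sums of `B`, are at
least this number, and a quadratic form only sees the symmetrisation of its coefficients, so for
`m ≥ 0` both differences are nonnegative.
-/

open Finset Matrix

section QuadraticForm

variable {ι R : Type*} [Fintype ι]

theorem dotProduct_mulVec_le_of_add_transpose_le [CommRing R] [LinearOrder R]
    [IsStrictOrderedRing R] {W V : Matrix ι ι R} (hWV : ∀ i j, W i j + W j i ≤ V i j + V j i)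
    {x : ι → R} (hx : 0 ≤ x) : x ⬝ᵥ W *ᵥ x ≤ x ⬝ᵥ V *ᵥ x := by
  have htranspose (M : Matrix ι ι R) : x ⬝ᵥ Mᵀ *ᵥ x = x ⬝ᵥ M *ᵥ x := by
    rw [mulVec_transpose, dotProduct_mulVec, dotProduct_comm]
  have hsymm : 0 ≤ x ⬝ᵥ (V - W + (V - W)ᵀ) *ᵥ x :=
    dotProduct_nonneg_of_nonneg hx fun i =>
      dotProduct_nonneg_of_nonneg (fun j => by
        simp only [Pi.zero_apply, Matrix.add_apply, Matrix.sub_apply, transpose_apply]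
        linarith [hWV i j]) hx
  rw [add_mulVec, dotProduct_add, htranspose, sub_mulVec, dotProduct_sub] at hsymm
  linarith

theorem sum_ite_mul_sum_ite {κ : Type*} [CommSemiring R] (s : Finset κ) (F G : ι → κ → Prop)
    [∀ p i, Decidable (F p i)] [∀ q i, Decidable (G q i)] (x : ι → R) :
    ∑ i ∈ s, (∑ p, if F p i then x p else 0) * (∑ q, if G q i then x q else 0) =
      x ⬝ᵥ (of fun p q => (#{i ∈ s | F p i ∧ G q i} : R)) *ᵥ x := by
  calc ∑ i ∈ s, (∑ p, if F p i then x p else 0) * (∑ q, if G q i then x q else 0)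
      = ∑ i ∈ s, ∑ p, ∑ q, if F p i ∧ G q i then x p * x q else 0 := by
        simp only [sum_mul_sum, ite_zero_mul_ite_zero]
    _ = ∑ p, ∑ q, ∑ i ∈ s, if F p i ∧ G q i then x p * x q else 0 := by
        rw [Finset.sum_comm]; exact sum_congr rfl fun p _ => Finset.sum_comm
    _ = _ := by
        simp only [dotProduct, mulVec, of_apply, Finset.mul_sum, ← sum_filter, sum_const,
          nsmul_eq_mul]
        exact sum_congr rfl fun p _ => sum_congr rfl fun q _ => by ring

theorem natCast_sum_sum_ite_mul [CommSemiring R] (c : ι → ι → Prop) [∀ p q, Decidable (c p q)]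
    (m : ι → ℕ) :
    ((∑ p, ∑ q, if c p q then m p * m q else 0 : ℕ) : R) =
      (fun p => (m p : R)) ⬝ᵥ (of fun p q => if c p q then 1 else 0) *ᵥ fun p => (m p : R) := by
  simp only [dotProduct, mulVec, of_apply, Finset.mul_sum, Nat.cast_sum]
  refine sum_congr rfl fun p _ => sum_congr rfl fun q _ => ?_
  split_ifs <;> simp [mul_comm]

end QuadraticForm

namespace PairIdx

variable {n : ℕ}

def support (p : PairIdx n) : Finset ℕ := Icc ((p.1.1 : ℕ) + 1) p.1.2

theorem natCast_lam (m : PairIdx n → ℕ) (i : ℕ) :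
    (lam n m i : ℤ) = ∑ p, if i ∈ support p then (m p : ℤ) else 0 := by
  simp [lam, support, apply_ite (Nat.cast : ℕ → ℤ)]

theorem card_support_inter (p q : PairIdx n) :
    #(support p ∩ support q) = min (p.1.2 : ℕ) q.1.2 - max (p.1.1 : ℕ) q.1.1 := by
  have : support p ∩ support q = Icc (max (p.1.1 : ℕ) q.1.1 + 1) (min (p.1.2 : ℕ) q.1.2) := by
    ext i; simp only [support, mem_inter, mem_Icc]; omega
  rw [this, Nat.card_Icc]; omega

theorem card_filter_succ_mem_support (p q : PairIdx n) :
    #{i ∈ support p | i + 1 ∈ support q} =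
      min (p.1.2 : ℕ) (q.1.2 - 1) - max (p.1.1 : ℕ) (q.1.1 - 1) := by
  have : {i ∈ support p | i + 1 ∈ support q} =
      Icc (max (p.1.1 : ℕ) (q.1.1 - 1) + 1) (min (p.1.2 : ℕ) (q.1.2 - 1)) := by
    ext i; simp only [support, mem_filter, mem_Icc]; omega
  rw [this, Nat.card_Icc]; omega

theorem filter_Icc_mem_support_and_mem_support (p q : PairIdx n) :
    {i ∈ Icc 1 (n - 1) | i ∈ support p ∧ i ∈ support q} = support p ∩ support q := by
  have := p.1.2.is_lt
  ext i
  simp only [support, mem_filter, mem_inter, mem_Icc]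
  omega

theorem filter_Icc_mem_support_and_succ_mem_support (p q : PairIdx n) :
    {i ∈ Icc 1 (n - 2) | i ∈ support p ∧ i + 1 ∈ support q} =
      {i ∈ support p | i + 1 ∈ support q} := by
  have := q.1.2.is_lt
  ext i
  simp only [support, mem_filter, mem_Icc]
  omega

def cartanMatrix : Matrix (PairIdx n) (PairIdx n) ℤ :=
  of fun p q => #(support p ∩ support q) - #{i ∈ support p | i + 1 ∈ support q}

theorem halfCartanForm_eq {m : PairIdx n → ℕ} {k : ℕ → ℕ}
    (hk : ∀ i, 1 ≤ i → i ≤ n - 1 → k i = lam n m i) :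
    halfCartanForm n k = (fun p => (m p : ℤ)) ⬝ᵥ cartanMatrix *ᵥ fun p => (m p : ℤ) := by
  set x : PairIdx n → ℤ := fun p => m p
  have hsq : ∑ i ∈ Icc 1 (n - 1), (k i : ℤ) ^ 2 =
      x ⬝ᵥ (of fun p q => (#(support p ∩ support q) : ℤ)) *ᵥ x := by
    calc ∑ i ∈ Icc 1 (n - 1), (k i : ℤ) ^ 2
        = ∑ i ∈ Icc 1 (n - 1), (∑ p, if i ∈ support p then x p else 0) *
            (∑ q, if i ∈ support q then x q else 0) := by
          refine sum_congr rfl fun i hi => ?_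
          rw [mem_Icc] at hi
          rw [sq, hk i hi.1 hi.2, natCast_lam]
      _ = _ := by
          rw [sum_ite_mul_sum_ite]
          simp only [filter_Icc_mem_support_and_mem_support]
  have hshift : ∑ i ∈ Icc 1 (n - 2), (k i : ℤ) * k (i + 1) =
      x ⬝ᵥ (of fun p q => (#{i ∈ support p | i + 1 ∈ support q} : ℤ)) *ᵥ x := by
    calc ∑ i ∈ Icc 1 (n - 2), (k i : ℤ) * k (i + 1)
        = ∑ i ∈ Icc 1 (n - 2), (∑ p, if i ∈ support p then x p else 0) *
            (∑ q, if i + 1 ∈ support q then x q else 0) := by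
          refine sum_congr rfl fun i hi => ?_
          rw [mem_Icc] at hi
          rw [hk i hi.1 (by omega), hk (i + 1) (by omega) (by omega), natCast_lam, natCast_lam]
      _ = _ := by
          rw [sum_ite_mul_sum_ite]
          simp only [filter_Icc_mem_support_and_succ_mem_support]
  rw [halfCartanForm, hsq, hshift, ← dotProduct_sub, ← sub_mulVec]
  rfl

theorem cartanMatrix_apply (p q : PairIdx n) :
    cartanMatrix p q =
      (if (q.1.2 : ℕ) ∈ support p then 1 else 0) - (if (q.1.1 : ℕ) ∈ support p then 1 else 0) := by
  have hq := q.2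
  rw [cartanMatrix, of_apply, card_support_inter, card_filter_succ_mem_support]
  simp only [support, mem_Icc, Fin.lt_def] at *
  split_ifs <;> omega

theorem cartanMatrix_add_cartanMatrix_swap (p q : PairIdx n) :
    cartanMatrix p q + cartanMatrix q p =
      (if p.1.1 = q.1.1 then 1 else 0) + (if p.1.2 = q.1.2 then 1 else 0) -
        (if p.1.1 = q.1.2 then 1 else 0) - (if p.1.2 = q.1.1 then 1 else 0) := by
  have hp := p.2
  have hq := q.2
  simp only [cartanMatrix_apply, support, mem_Icc, Fin.lt_def, Fin.ext_iff] at *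
  split_ifs <;> omega

def sharedEndpoints (p q : PairIdx n) : ℤ :=
  (if p.1.1 = q.1.1 then 1 else 0) + (if p.1.2 = q.1.2 then 1 else 0)

theorem cartanMatrix_add_cartanMatrix_swap_le (p q : PairIdx n) :
    cartanMatrix p q + cartanMatrix q p ≤ sharedEndpoints p q := by
  rw [cartanMatrix_add_cartanMatrix_swap, sharedEndpoints]
  split_ifs <;> omega

def bMatrix' : Matrix (PairIdx n) (PairIdx n) ℤ :=
  of fun p q => if p.1.1 ≤ q.1.1 ∧ p.1.2 ≤ q.1.2 ∧ (q.1.1 : ℕ) < (p.1.2 : ℕ) then 1 else 0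

def sameStartMatrix : Matrix (PairIdx n) (PairIdx n) ℤ :=
  of fun p q => if p.1.1 = q.1.1 ∧ p.1.2 ≤ q.1.2 then 1 else 0

def sameEndMatrix : Matrix (PairIdx n) (PairIdx n) ℤ :=
  of fun p q => if p.1.2 = q.1.2 ∧ p.1.1 < q.1.1 then 1 else 0

theorem sharedEndpoints_le_bMatrix'_add_swap (p q : PairIdx n) :
    sharedEndpoints p q ≤ bMatrix' p q + bMatrix' q p := by
  have hp := p.2
  have hq := q.2
  simp only [sharedEndpoints, bMatrix', of_apply, Fin.le_def, Fin.lt_def, Fin.ext_iff] at *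
  split_ifs <;> omega

theorem sharedEndpoints_le_sameStartMatrix_add_sameEndMatrix_add_swap (p q : PairIdx n) :
    sharedEndpoints p q ≤
      (sameStartMatrix + sameEndMatrix : Matrix (PairIdx n) (PairIdx n) ℤ) p q +
        (sameStartMatrix + sameEndMatrix : Matrix (PairIdx n) (PairIdx n) ℤ) q p := by
  have hp := p.2
  have hq := q.2
  simp only [sharedEndpoints, sameStartMatrix, sameEndMatrix, Matrix.add_apply, of_apply,
    Fin.le_def, Fin.lt_def, Fin.ext_iff] at *
  split_ifs <;> omega

theorem natCast_Bform' (m : PairIdx n → ℕ) :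
    (Bform' n m : ℤ) = (fun p => (m p : ℤ)) ⬝ᵥ bMatrix' *ᵥ fun p => (m p : ℤ) :=
  natCast_sum_sum_ite_mul _ m

theorem dotProduct_sameStartMatrix_add_sameEndMatrix_le_Bform (m : PairIdx n → ℕ) :
    (fun p => (m p : ℤ)) ⬝ᵥ (sameStartMatrix + sameEndMatrix) *ᵥ (fun p => (m p : ℤ)) ≤
      Bform n m := by
  rw [add_mulVec, dotProduct_add, sameStartMatrix, sameEndMatrix, ← natCast_sum_sum_ite_mul,
    ← natCast_sum_sum_ite_mul, ← Nat.cast_add, Nat.cast_le, Bform]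
  omega

end PairIdx

open PairIdx in
theorem quadratic_form_differences_nonneg_general (n : ℕ)
    (m : PairIdx n → ℕ) (k : ℕ → ℕ) (hk : ∀ i, 1 ≤ i → i ≤ n - 1 → k i = lam n m i) :
    0 ≤ (Bform n m : ℤ) - halfCartanForm n k ∧
    0 ≤ (Bform' n m : ℤ) - halfCartanForm n k := by
  have hx : 0 ≤ fun p => (m p : ℤ) := fun p => Nat.cast_nonneg _
  rw [halfCartanForm_eq hk, sub_nonneg, sub_nonneg, natCast_Bform']
  constructor
  · exact (dotProduct_mulVec_le_of_add_transpose_le (fun p q =>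
      (cartanMatrix_add_cartanMatrix_swap_le p q).trans
        (sharedEndpoints_le_sameStartMatrix_add_sameEndMatrix_add_swap p q)) hx).trans
      (dotProduct_sameStartMatrix_add_sameEndMatrix_le_Bform m)
  · exact dotProduct_mulVec_le_of_add_transpose_le (fun p q =>
      (cartanMatrix_add_cartanMatrix_swap_le p q).trans
        (sharedEndpoints_le_bMatrix'_add_swap p q)) hx

/-- For every `k ∈ ℕ^{n-1}` and every nonnegative integer solution `m` of `λᵢ(m) = kᵢ`, the
differences `B(m) - ½ kᵀAk` and `B'(m) - ½ kᵀAk` are nonnegative integers. -/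
theorem quadratic_form_differences_nonneg (n : ℕ) (hn : 2 ≤ n)
    (m : PairIdx n → ℕ) (k : ℕ → ℕ) (hk : ∀ i, 1 ≤ i → i ≤ n - 1 → k i = lam n m i) :
    0 ≤ (Bform n m : ℤ) - halfCartanForm n k ∧
    0 ≤ (Bform' n m : ℤ) - halfCartanForm n k :=
  quadratic_form_differences_nonneg_general n m k hk
end
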